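/- (Corollary 3.4, clique form.) Let K ≥ 1 and let c : Fin K → Fin K → ℝ (clique distances) and d : Fin K → ℝ be given. Suppose there exists an affinely independent family p : Fin K → ℝ^K with dist(p i, p j) = c i j for all i, j, together with a point y₀ ∉ affineSpan ℝ (Set.range p) satisfying dist(y₀, p i) = d i for all i. Then for EVERY affinely independent family q : Fin K → ℝ^K with dist(q i, q j) = c i j for all i, j, the set {z ∈ ℝ^K : ∀ i, dist(z, q i) = d i} has exactly two elements. -/

import Mathlib

/-!
Two points with the same distances to all the `q i` have the hyperplane `affineSpan (range q)`
in their perpendicular bisector, so they differ by a normal vector and, being equidistant from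
the foot of the perpendicular, are equal or mirror images. A solution off the hyperplane is
obtained from `y₀` by transporting the foot of its perpendicular along barycentric coordinates
(pairwise distances determine all distances between affine combinations) and erecting a normal
of the same height there.
-/

open EuclideanGeometry Module AffineSubspace

lemma eq_or_eq_neg_of_norm_eq_of_finrank_eq_one {E : Type*} [NormedAddCommGroup E]
    [NormedSpace ℝ E] (hE : finrank ℝ E = 1) {x y : E} (hxy : ‖x‖ = ‖y‖) : y = x ∨ y = -x := by
  rcases eq_or_ne x 0 with rfl | hx
  · exact .inl (norm_eq_zero.mp (by simpa using hxy.symm))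
  obtain ⟨c, rfl⟩ := exists_smul_eq_of_finrank_eq_one hE hx y
  have hc : |c| = 1 := by
    rw [norm_smul, Real.norm_eq_abs] at hxy
    exact (mul_eq_right₀ (norm_ne_zero_iff.mpr hx)).mp hxy.symm
  rcases abs_eq (zero_le_one' ℝ) |>.mp hc with rfl | rfl
  · exact .inl (one_smul ℝ x)
  · exact .inr (neg_one_smul ℝ x)

variable {V P : Type*} [NormedAddCommGroup V] [InnerProductSpace ℝ V] [MetricSpace P]
  [NormedAddTorsor V P]

lemma finrank_direction_affineSpan_orthogonal_eq_one [FiniteDimensional ℝ V] {ι : Type*}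
    [Fintype ι] [Nonempty ι] {q : ι → P} (hq : AffineIndependent ℝ q)
    (hV : finrank ℝ V = Fintype.card ι) :
    finrank ℝ (affineSpan ℝ (Set.range q)).directionᗮ = 1 := by
  apply Submodule.finrank_add_finrank_orthogonal'
  obtain ⟨n, hn⟩ := Nat.exists_eq_succ_of_ne_zero (Fintype.card_ne_zero (α := ι))
  rw [direction_affineSpan, hq.finrank_vectorSpan hn, hV, hn]

lemma eq_or_eq_reflection_of_le_perpBisector {s : AffineSubspace ℝ P} [Nonempty s]
    [s.direction.HasOrthogonalProjection] (hs : finrank ℝ s.directionᗮ = 1) {z₁ z₂ : P}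
    (h : s ≤ perpBisector z₁ z₂) : z₂ = z₁ ∨ z₂ = reflection s z₁ := by
  set m : P := ↑(orthogonalProjection s z₁)
  have hm : m ∈ perpBisector z₁ z₂ := h (orthogonalProjection_mem z₁)
  have h₁ : z₁ -ᵥ m ∈ s.directionᗮ := vsub_orthogonalProjection_mem_direction_orthogonal s z₁
  have h₁₂ : z₂ -ᵥ z₁ ∈ s.directionᗮ := by
    have hdir := direction_perpBisector z₁ z₂ ▸ direction_le h
    exact Submodule.orthogonal_le hdir
      (Submodule.le_orthogonal_orthogonal _ (Submodule.mem_span_singleton_self _))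
  have h₂ : z₂ -ᵥ m ∈ s.directionᗮ := by
    rw [← vsub_add_vsub_cancel z₂ z₁ m]
    exact add_mem h₁₂ h₁
  rcases eq_or_eq_neg_of_norm_eq_of_finrank_eq_one hs (x := ⟨_, h₁⟩) (y := ⟨_, h₂⟩)
    (by simpa [← dist_eq_norm_vsub] using mem_perpBisector_iff_dist_eq'.mp hm) with h | h
  · exact .inl (vsub_left_cancel (congrArg Subtype.val h))
  · right
    have h' : z₂ -ᵥ m = m -ᵥ z₁ := by simpa using congrArg Subtype.val h
    rw [reflection_apply', ← h', vsub_vadd]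

lemma dist_affineCombination_eq_of_forall_dist_eq {ι : Type*} {t : Finset ι} {p q : ι → P}
    (h : ∀ i j, dist (p i) (p j) = dist (q i) (q j)) {w₁ w₂ : ι → ℝ}
    (h₁ : ∑ i ∈ t, w₁ i = 1) (h₂ : ∑ i ∈ t, w₂ i = 1) :
    dist (t.affineCombination ℝ p w₁) (t.affineCombination ℝ p w₂) =
      dist (t.affineCombination ℝ q w₁) (t.affineCombination ℝ q w₂) := by
  rw [← mul_self_inj dist_nonneg dist_nonneg, dist_affineCombination p h₁ h₂,
    dist_affineCombination q h₁ h₂]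
  simp only [h]

lemma exists_mem_affineSpan_forall_dist_eq {ι : Type*} [Fintype ι] {p q : ι → P}
    (h : ∀ i j, dist (p i) (p j) = dist (q i) (q j)) {m : P}
    (hm : m ∈ affineSpan ℝ (Set.range p)) :
    ∃ m' ∈ affineSpan ℝ (Set.range q), ∀ i, dist m' (q i) = dist m (p i) := by
  classical
  obtain ⟨w, hw, rfl⟩ := eq_affineCombination_of_mem_affineSpan_of_fintype hm
  refine ⟨_, affineCombination_mem_affineSpan hw q, fun i => ?_⟩
  have hi := Finset.mem_univ i
  rw [← Finset.univ.affineCombination_piSingle ℝ q hi,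
    ← Finset.univ.affineCombination_piSingle ℝ p hi]
  exact (dist_affineCombination_eq_of_forall_dist_eq h hw (by simp)).symm

lemma dist_vadd_sq_of_mem_orthogonal {s : AffineSubspace ℝ P} {x y : P} (hx : x ∈ s)
    (hy : y ∈ s) {v : V} (hv : v ∈ s.directionᗮ) :
    dist (v +ᵥ x) y ^ 2 = ‖v‖ ^ 2 + dist x y ^ 2 := by
  have := dist_sq_smul_orthogonal_vadd_smul_orthogonal_vadd hx hy 1 0 hv
  simp only [one_smul, zero_smul, zero_vadd, sub_zero, norm_one, one_mul] at this
  rw [sq, sq, sq, this, add_comm]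

lemma exists_notMem_affineSpan_forall_dist_eq [FiniteDimensional ℝ V] {ι : Type*} [Fintype ι]
    [Nonempty ι] {p q : ι → P} (h : ∀ i j, dist (p i) (p j) = dist (q i) (q j))
    (hq : (affineSpan ℝ (Set.range q)).directionᗮ ≠ ⊥) {y : P}
    (hy : y ∉ affineSpan ℝ (Set.range p)) :
    ∃ z ∉ affineSpan ℝ (Set.range q), ∀ i, dist z (q i) = dist y (p i) := by
  set m : P := ↑(orthogonalProjection (affineSpan ℝ (Set.range p)) y)
  obtain ⟨m', hm', hdist⟩ := exists_mem_affineSpan_forall_dist_eq h (orthogonalProjection_mem y)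
  have : Nontrivial (affineSpan ℝ (Set.range q)).directionᗮ :=
    Submodule.nontrivial_iff_ne_bot.mpr hq
  obtain ⟨⟨v, hv⟩, hvm⟩ := exists_norm_eq (affineSpan ℝ (Set.range q)).directionᗮ
    (dist_nonneg (x := y) (y := m))
  replace hvm : ‖v‖ = dist y m := hvm
  refine ⟨v +ᵥ m', fun hz => ?_, fun i => ?_⟩
  · have hv0 : v = 0 := Submodule.disjoint_def.mp (Submodule.orthogonal_disjoint _) v
      ((vadd_mem_iff_mem_direction v hm').mp hz) hv
    exact dist_orthogonalProjection_ne_zero_of_notMem hy (by rw [← hvm, hv0, norm_zero])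
  · have hpi : p i ∈ affineSpan ℝ (Set.range p) := mem_affineSpan ℝ (Set.mem_range_self i)
    have hqi : q i ∈ affineSpan ℝ (Set.range q) := mem_affineSpan ℝ (Set.mem_range_self i)
    have hy' := dist_vadd_sq_of_mem_orthogonal (orthogonalProjection_mem y) hpi
      (vsub_orthogonalProjection_mem_direction_orthogonal _ y)
    rw [vsub_vadd, ← dist_eq_norm_vsub] at hy'
    rw [← sq_eq_sq₀ dist_nonneg dist_nonneg, dist_vadd_sq_of_mem_orthogonal hm' hqi hv, hy', hvm,
      hdist]

lemma encard_setOf_forall_dist_eq [FiniteDimensional ℝ V] {ι : Type*} [Nonempty ι]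
    {q : ι → P} (hq : finrank ℝ (affineSpan ℝ (Set.range q)).directionᗮ = 1) {z : P}
    (hz : z ∉ affineSpan ℝ (Set.range q)) :
    {x | ∀ i, dist x (q i) = dist z (q i)}.encard = 2 := by
  set s := affineSpan ℝ (Set.range q)
  have : {x | ∀ i, dist x (q i) = dist z (q i)} = {z, reflection s z} := by
    ext x
    constructor
    · intro hx
      refine eq_or_eq_reflection_of_le_perpBisector hq ?_
      simpa [s, affineSpan_le, Set.range_subset_iff, mem_perpBisector_iff_dist_eq, dist_comm,
        eq_comm] using hx
    · rintro (rfl | rfl) i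
      · rfl
      · rw [dist_comm, dist_reflection_eq_of_mem s (mem_affineSpan ℝ (Set.mem_range_self i)),
          dist_comm]
  rw [this, Set.encard_pair]
  exact fun h => hz ((reflection_eq_self_iff z).mp h.symm)

theorem trilateration_clique_always_two_general (K : ℕ) (hK : 1 ≤ K)
    (c : Fin K → Fin K → ℝ) (d : Fin K → ℝ)
    (p : Fin K → EuclideanSpace ℝ (Fin K))
    (hpc : ∀ i j, dist (p i) (p j) = c i j)
    (y₀ : EuclideanSpace ℝ (Fin K)) (hy₀ : y₀ ∉ affineSpan ℝ (Set.range p))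
    (hd : ∀ i, dist y₀ (p i) = d i) :
    ∀ q : Fin K → EuclideanSpace ℝ (Fin K), AffineIndependent ℝ q →
      (∀ i j, dist (q i) (q j) = c i j) →
      {z : EuclideanSpace ℝ (Fin K) | ∀ i, dist z (q i) = d i}.encard = 2 := by
  intro q hq hqc
  have : Nonempty (Fin K) := ⟨⟨0, hK⟩⟩
  have hcodim : finrank ℝ (affineSpan ℝ (Set.range q)).directionᗮ = 1 :=
    finrank_direction_affineSpan_orthogonal_eq_one hq (by simp)
  obtain ⟨z, hz, hzq⟩ := exists_notMem_affineSpan_forall_dist_eq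
    (fun i j => (hpc i j).trans (hqc i j).symm)
    (Submodule.one_le_finrank_iff.mp hcodim.ge) hy₀
  simp only [← hd, ← hzq]
  exact encard_setOf_forall_dist_eq hcodim hz

/-- Clique form: if the prescribed clique distances c admit one realization p in
general position (affinely independent) together with a trilateration solution y₀
outside the affine span of p, then EVERY affinely independent realization q of the
clique distances admits exactly two trilateration solutions. -/
theorem trilateration_clique_always_two (K : ℕ) (hK : 1 ≤ K)
    (c : Fin K → Fin K → ℝ) (d : Fin K → ℝ)
    (p : Fin K → EuclideanSpace ℝ (Fin K)) (hp : AffineIndependent ℝ p)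
    (hpc : ∀ i j, dist (p i) (p j) = c i j)
    (y₀ : EuclideanSpace ℝ (Fin K)) (hy₀ : y₀ ∉ affineSpan ℝ (Set.range p))
    (hd : ∀ i, dist y₀ (p i) = d i) :
    ∀ q : Fin K → EuclideanSpace ℝ (Fin K), AffineIndependent ℝ q →
      (∀ i j, dist (q i) (q j) = c i j) →
      {z : EuclideanSpace ℝ (Fin K) | ∀ i, dist z (q i) = d i}.encard = 2 :=
  trilateration_clique_always_two_general K hK c d p hpc y₀ hy₀ hd
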